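/- arXiv:2602.20698 — 2 statements merged into one kernel-verified Lean document; each statement's English description precedes it below -/
import Mathlib

section
/- Let ε, γ > 0 with ε < 1. Let X be an ℝ^d-valued random variable with mean μ_X and Cov[X] ⪯ γ·I_d, and define the truncated variable X' = X if ‖X − μ_X‖₂ ≤ 2√(γd/ε) and X' = μ_X otherwise. Let μ' = E[X']. Then ‖μ' − μ_X‖₂² ≤ 6γε/(1 − 3γε) when 3γε < 1; in particular ‖μ' − μ_X‖₂ = O(√(γε)). Specifically, writing b = μ' − μ_X, one has ‖b‖₂⁴ ≤ 3γε(2‖b‖₂² + ‖b‖₂⁴). -/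
/-!
Put `Y = X - μX` and let `A` be the event on which `X` is truncated, so that
`b = μ' - μX = -∫_A Y` and `‖b‖² = -∫_A ⟪b, Y⟫`. Cauchy–Schwarz on `A` gives
`‖b‖⁴ ≤ μ(A) · E⟪b, Y⟫² = μ(A) · bᵀ Cov b ≤ μ(A) · γ ‖b‖²`, and Markov's inequality applied to
`‖Y‖²`, whose mean is `tr Cov ≤ γ d`, gives `μ(A) ≤ ε / 4`. Hence `‖b‖² ≤ γ ε / 4`, which implies
both bounds.
-/

open MeasureTheory Matrix

section
variable {ι : Type*} [Fintype ι] [DecidableEq ι]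

theorem Matrix.PosSemidef.dotProduct_mulVec_le_of_smul_one_sub {C : Matrix ι ι ℝ} {γ : ℝ}
    (h : (γ • 1 - C).PosSemidef) (v : ι → ℝ) : v ⬝ᵥ C *ᵥ v ≤ γ * (v ⬝ᵥ v) := by
  have hnonneg := h.dotProduct_mulVec_nonneg v
  simp only [sub_mulVec, smul_mulVec, one_mulVec, dotProduct_sub, dotProduct_smul, smul_eq_mul,
    star_trivial] at hnonneg
  linarith

theorem Matrix.PosSemidef.trace_le_of_smul_one_sub {C : Matrix ι ι ℝ} {γ : ℝ}
    (h : (γ • 1 - C).PosSemidef) : C.trace ≤ γ * Fintype.card ι := by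
  have hnonneg := h.trace_nonneg
  simp only [trace_sub, trace_smul, trace_one, smul_eq_mul] at hnonneg
  linarith

end

section
variable {Ω ι : Type*} [MeasurableSpace Ω] {μ : Measure Ω}

theorem sq_integral_le_measureReal_univ_mul_integral_sq [IsFiniteMeasure μ] {f : Ω → ℝ}
    (hf : MemLp f 2 μ) : (∫ ω, f ω ∂μ) ^ 2 ≤ μ.real Set.univ * ∫ ω, f ω ^ 2 ∂μ := by
  have hf1 : Integrable f μ := hf.integrable one_le_two
  have hquad : ∀ t : ℝ,
      0 ≤ μ.real Set.univ * (t * t) + 2 * (∫ ω, f ω ∂μ) * t + ∫ ω, f ω ^ 2 ∂μ := by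
    intro t
    have hexp : ∫ ω, (t + f ω) ^ 2 ∂μ
        = μ.real Set.univ * (t * t) + 2 * (∫ ω, f ω ∂μ) * t + ∫ ω, f ω ^ 2 ∂μ := by
      have hlin : Integrable (fun ω => t ^ 2 + 2 * t * f ω) μ :=
        (integrable_const _).add (hf1.const_mul _)
      simp only [add_sq]
      rw [integral_add hlin hf.integrable_sq, integral_add (integrable_const _) (hf1.const_mul _),
        integral_const, integral_const_mul]
      simp only [smul_eq_mul]
      ring
    rw [← hexp]
    exact integral_nonneg fun ω => sq_nonneg _
  have hdisc := discrim_le_zero hquad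
  rw [discrim] at hdisc
  linarith

theorem measureReal_two_mul_sqrt_div_lt_sqrt_le [IsFiniteMeasure μ] {g : Ω → ℝ} (hg0 : 0 ≤ g)
    (hg : Integrable g μ) {s ε : ℝ} (hs : 0 < s) (hε : 0 < ε) (hgs : ∫ ω, g ω ∂μ ≤ s) :
    μ.real {ω | 2 * √(s / ε) < √(g ω)} ≤ ε / 4 := by
  have hsub : {ω | 2 * √(s / ε) < √(g ω)} ⊆ {ω | 4 * s / ε ≤ g ω} := by
    intro ω hω
    have hsq := (Real.lt_sqrt (by positivity)).1 hω
    rw [mul_pow, Real.sq_sqrt (by positivity)] at hsq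
    show 4 * s / ε ≤ g ω
    linarith [show (2 : ℝ) ^ 2 * (s / ε) = 4 * s / ε by ring]
  have hmarkov : 4 * s / ε * μ.real {ω | 4 * s / ε ≤ g ω} ≤ s :=
    (mul_meas_ge_le_integral_of_nonneg (Filter.Eventually.of_forall hg0) hg _).trans hgs
  rw [div_mul_eq_mul_div, div_le_iff₀ hε] at hmarkov
  nlinarith [measureReal_mono hsub (μ := μ)]

theorem integral_ite_apply_eq_sub_setIntegral {p : Ω → Prop} [DecidablePred p]
    (hp : MeasurableSet {ω | p ω}) [IsFiniteMeasure μ] {Z : Ω → ι → ℝ} (m : ι → ℝ) {i : ι}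
    (hZ : Integrable (fun ω => Z ω i) μ) :
    ∫ ω, (if p ω then Z ω else m) i ∂μ
      = ∫ ω, Z ω i ∂μ - ∫ ω in {ω | p ω}ᶜ, (Z ω i - m i) ∂μ := by
  have htrunc : (fun ω => (if p ω then Z ω else m) i)
      = fun ω => Z ω i - {ω | p ω}ᶜ.indicator (fun ω => Z ω i - m i) ω := by
    funext ω
    by_cases h : p ω <;> simp [h]
  have hind : Integrable ({ω | p ω}ᶜ.indicator fun ω => Z ω i - m i) μ :=
    (hZ.sub (integrable_const _)).indicator hp.compl
  rw [htrunc, integral_sub hZ hind, integral_indicator hp.compl]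

variable [Fintype ι]

theorem integral_sq_dotProduct {Y : Ω → ι → ℝ} {C : Matrix ι ι ℝ}
    (hY : ∀ i j, Integrable (fun ω => Y ω i * Y ω j) μ)
    (hC : ∀ i j, C i j = ∫ ω, Y ω i * Y ω j ∂μ) (v : ι → ℝ) :
    ∫ ω, (v ⬝ᵥ Y ω) ^ 2 ∂μ = v ⬝ᵥ C *ᵥ v := by
  have hexp : ∀ ω, (v ⬝ᵥ Y ω) ^ 2 = ∑ i, ∑ j, v i * v j * (Y ω i * Y ω j) := fun ω => by
    simp only [dotProduct, sq, Finset.sum_mul_sum]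
    exact Finset.sum_congr rfl fun i _ => Finset.sum_congr rfl fun j _ => by ring
  simp_rw [hexp]
  rw [integral_finsetSum _ fun i _ => integrable_finsetSum _ fun j _ => (hY i j).const_mul _]
  simp only [dotProduct, mulVec, Finset.mul_sum]
  refine Finset.sum_congr rfl fun i _ => ?_
  rw [integral_finsetSum _ fun j _ => (hY i j).const_mul _]
  refine Finset.sum_congr rfl fun j _ => ?_
  rw [integral_const_mul, hC]
  ring

theorem integral_sum_sq {Y : Ω → ι → ℝ} {C : Matrix ι ι ℝ}
    (hY : ∀ i j, Integrable (fun ω => Y ω i * Y ω j) μ)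
    (hC : ∀ i j, C i j = ∫ ω, Y ω i * Y ω j ∂μ) :
    ∫ ω, ∑ i, Y ω i ^ 2 ∂μ = C.trace := by
  simp only [sq]
  rw [integral_finsetSum _ fun i _ => hY i i]
  simp only [trace, diag, hC]

variable [DecidableEq ι]

theorem measureReal_compl_sqrt_sum_sq_le [IsFiniteMeasure μ] {Y : Ω → ι → ℝ} {C : Matrix ι ι ℝ}
    {γ ε : ℝ} (hY : ∀ i, MemLp (fun ω => Y ω i) 2 μ) (hC : ∀ i j, C i j = ∫ ω, Y ω i * Y ω j ∂μ)
    (hCγ : (γ • 1 - C).PosSemidef) (hγ : 0 < γ) (hε : 0 < ε) :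
    μ.real {ω | √(∑ i, Y ω i ^ 2) ≤ 2 * √(γ * Fintype.card ι / ε)}ᶜ ≤ ε / 4 := by
  cases isEmpty_or_nonempty ι
  · simp only [Finset.univ_eq_empty, Finset.sum_empty, Real.sqrt_zero, Fintype.card_eq_zero,
      CharP.cast_eq_zero, mul_zero, zero_div, le_refl, Set.ofPred_true, Set.compl_univ,
      measureReal_empty]
    positivity
  have hsum : ∫ ω, ∑ i, Y ω i ^ 2 ∂μ ≤ γ * Fintype.card ι := by
    rw [integral_sum_sq (fun i j => (hY i).integrable_mul (hY j)) hC]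
    exact hCγ.trace_le_of_smul_one_sub
  simp only [Set.compl_ofPred, not_le]
  exact measureReal_two_mul_sqrt_div_lt_sqrt_le (fun ω => Finset.sum_nonneg fun i _ => sq_nonneg _)
    (integrable_finsetSum _ fun i _ => (hY i).integrable_sq) (by positivity) hε hsum

theorem sq_dotProduct_setIntegral_le [IsFiniteMeasure μ] {Y : Ω → ι → ℝ} {C : Matrix ι ι ℝ}
    {γ : ℝ} (hY : ∀ i, MemLp (fun ω => Y ω i) 2 μ) (hC : ∀ i j, C i j = ∫ ω, Y ω i * Y ω j ∂μ)
    (hCγ : (γ • 1 - C).PosSemidef) {A : Set Ω} {b : ι → ℝ}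
    (hb : ∀ i, b i = ∫ ω in A, Y ω i ∂μ) :
    (b ⬝ᵥ b) ^ 2 ≤ μ.real A * (γ * (b ⬝ᵥ b)) := by
  have hbY : MemLp (fun ω => b ⬝ᵥ Y ω) 2 μ :=
    memLp_finsetSum _ fun i _ => (hY i).const_mul (b i)
  have hbb : b ⬝ᵥ b = ∫ ω in A, b ⬝ᵥ Y ω ∂μ := by
    simp only [dotProduct]
    rw [integral_finsetSum _ fun i _ =>
      ((hY i).integrable one_le_two).integrableOn.const_mul _]
    simp only [integral_const_mul, hb]
  calc (b ⬝ᵥ b) ^ 2 = (∫ ω in A, b ⬝ᵥ Y ω ∂μ) ^ 2 := by rw [hbb]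
    _ ≤ μ.real A * ∫ ω in A, (b ⬝ᵥ Y ω) ^ 2 ∂μ := by
      simpa using sq_integral_le_measureReal_univ_mul_integral_sq (hbY.restrict A)
    _ ≤ μ.real A * ∫ ω, (b ⬝ᵥ Y ω) ^ 2 ∂μ :=
      mul_le_mul_of_nonneg_left (setIntegral_le_integral hbY.integrable_sq
        (Filter.Eventually.of_forall fun ω => sq_nonneg _)) measureReal_nonneg
    _ = μ.real A * (b ⬝ᵥ C *ᵥ b) := by
      rw [integral_sq_dotProduct (fun i j => (hY i).integrable_mul (hY j)) hC]
    _ ≤ μ.real A * (γ * (b ⬝ᵥ b)) := by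
      gcongr
      exact hCγ.dotProduct_mulVec_le_of_smul_one_sub b
end

theorem stmt_7_general {d : ℕ} {Ω : Type*} [MeasurableSpace Ω] (μ : Measure Ω)
    [IsProbabilityMeasure μ] (X : Ω → Fin d → ℝ) (hmeas : Measurable X)
    (ε γ : ℝ) (hε : 0 < ε) (hγ : 0 < γ)
    (hint : ∀ i j, Integrable (fun ω => X ω i * X ω j) μ)
    (μX : Fin d → ℝ) (hμX : ∀ i, μX i = ∫ ω, X ω i ∂μ)
    (Cov : Matrix (Fin d) (Fin d) ℝ)
    (hCov : ∀ i j, Cov i j = ∫ ω, (X ω i - μX i) * (X ω j - μX j) ∂μ)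
    (hCovBound : (γ • (1 : Matrix (Fin d) (Fin d) ℝ) - Cov).PosSemidef)
    (X' : Ω → Fin d → ℝ)
    (hX' : ∀ ω, X' ω =
      if Real.sqrt (∑ i, (X ω i - μX i) ^ 2) ≤ 2 * Real.sqrt (γ * d / ε) then X ω else μX)
    (μ' : Fin d → ℝ) (hμ' : ∀ i, μ' i = ∫ ω, X' ω i ∂μ)
    (b2 : ℝ) (hb2 : b2 = ∑ i, (μ' i - μX i) ^ 2) :
    b2 ^ 2 ≤ 3 * γ * ε * (2 * b2 + b2 ^ 2) ∧
    (3 * γ * ε < 1 → b2 ≤ 6 * γ * ε / (1 - 3 * γ * ε)) := by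
  have hX : ∀ i, MemLp (fun ω => X ω i) 2 μ := fun i =>
    (memLp_two_iff_integrable_sq (by fun_prop : Measurable fun ω => X ω i).aestronglyMeasurable).2
      (by simpa only [sq] using hint i i)
  have hY : ∀ i, MemLp (fun ω => X ω i - μX i) 2 μ := fun i => (hX i).sub (memLp_const _)
  have hp : MeasurableSet {ω | √(∑ i, (X ω i - μX i) ^ 2) ≤ 2 * √(γ * d / ε)} :=
    measurableSet_le (by fun_prop) measurable_const
  set A := {ω | √(∑ i, (X ω i - μX i) ^ 2) ≤ 2 * √(γ * d / ε)}ᶜ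
  set b : Fin d → ℝ := fun i => ∫ ω in A, (X ω i - μX i) ∂μ
  have hμ'_sub : ∀ i, μ' i - μX i = -b i := fun i => by
    simp only [hμ', hX']
    rw [integral_ite_apply_eq_sub_setIntegral hp μX ((hX i).integrable one_le_two), ← hμX i]
    ring
  have hb : b2 = b ⬝ᵥ b := by
    simp only [hb2, hμ'_sub, sq, neg_mul_neg, dotProduct]
  have hμA : μ.real A ≤ ε / 4 := by
    simpa only [Fintype.card_fin] using
      measureReal_compl_sqrt_sum_sq_le (μ := μ) hY hCov hCovBound hγ hε
  have hb0 : 0 ≤ b2 := hb2 ▸ Finset.sum_nonneg fun i _ => sq_nonneg _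
  have hbias : b2 ≤ γ * ε / 4 := by
    have h := sq_dotProduct_setIntegral_le hY hCov hCovBound (A := A) (b := b) fun _ => rfl
    rw [← hb] at h
    rcases hb0.eq_or_lt with h0 | hpos
    · rw [← h0]
      positivity
    · nlinarith [mul_le_mul_of_nonneg_right hμA (by positivity : 0 ≤ γ * b2)]
  refine ⟨by nlinarith [mul_pos hγ hε], fun h => ?_⟩
  rw [le_div_iff₀ (by linarith)]
  nlinarith [mul_pos hγ hε]

theorem stmt_7 {d : ℕ} {Ω : Type*} [MeasurableSpace Ω] (μ : Measure Ω)
    [IsProbabilityMeasure μ] (X : Ω → Fin d → ℝ) (hmeas : Measurable X)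
    (ε γ : ℝ) (hε : 0 < ε) (hε1 : ε < 1) (hγ : 0 < γ)
    (hint : ∀ i j, Integrable (fun ω => X ω i * X ω j) μ)
    (μX : Fin d → ℝ) (hμX : ∀ i, μX i = ∫ ω, X ω i ∂μ)
    (Cov : Matrix (Fin d) (Fin d) ℝ)
    (hCov : ∀ i j, Cov i j = ∫ ω, (X ω i - μX i) * (X ω j - μX j) ∂μ)
    (hCovBound : (γ • (1 : Matrix (Fin d) (Fin d) ℝ) - Cov).PosSemidef)
    (X' : Ω → Fin d → ℝ)
    (hX' : ∀ ω, X' ω =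
      if Real.sqrt (∑ i, (X ω i - μX i) ^ 2) ≤ 2 * Real.sqrt (γ * d / ε) then X ω else μX)
    (μ' : Fin d → ℝ) (hμ' : ∀ i, μ' i = ∫ ω, X' ω i ∂μ)
    (b2 : ℝ) (hb2 : b2 = ∑ i, (μ' i - μX i) ^ 2) :
    b2 ^ 2 ≤ 3 * γ * ε * (2 * b2 + b2 ^ 2) ∧
    (3 * γ * ε < 1 → b2 ≤ 6 * γ * ε / (1 - 3 * γ * ε)) :=
  stmt_7_general μ X hmeas ε γ hε hγ hint μX hμX Cov hCov hCovBound X' hX' μ' hμ' b2 hb2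
end

section
/- Let ε, ε* ∈ (0,1), and let v₁, …, vₙ, Z₁, …, Zₙ ∈ ℝ^d with means v̄, Z̄, along with weights Wᵢ ∈ {0,1} with Σᵢ Wᵢ = (1−ε)n, indicators χᵢ ∈ {0,1} with Σᵢ(1−χᵢ) ≤ ε*n, such that Wᵢχᵢ = 1 implies vᵢ = Zᵢ. If both empirical covariances of {vᵢ} and {Zᵢ} are ⪯ υ·I_d for some υ > 0, then ‖v̄ − Z̄‖₂⁴ ≤ (ε + ε*) · 3(4υ‖v̄ − Z̄‖₂² + ‖v̄ − Z̄‖₂⁴); consequently, if ε + ε* is a sufficiently small constant, ‖v̄ − Z̄‖₂² = O((ε + ε*)·υ). -/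
set_option maxHeartbeats 1000000 in


theorem stmt_19 {d n : ℕ} (hn : 0 < n) (ε εstar υ : ℝ)
    (hε : ε ∈ Set.Ioo (0 : ℝ) 1) (hεstar : εstar ∈ Set.Ioo (0 : ℝ) 1) (hυ : 0 < υ)
    (v Z : Fin n → Fin d → ℝ) (vbar Zbar : Fin d → ℝ)
    (hvbar : vbar = (n : ℝ)⁻¹ • ∑ i, v i)
    (hZbar : Zbar = (n : ℝ)⁻¹ • ∑ i, Z i)
    (W χ : Fin n → ℝ)
    (hW01 : ∀ i, W i = 0 ∨ W i = 1)
    (hWsum : ∑ i, W i = (1 - ε) * n)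
    (hχ01 : ∀ i, χ i = 0 ∨ χ i = 1)
    (hχsum : ∑ i, (1 - χ i) ≤ εstar * n)
    (hclean : ∀ i, W i * χ i = 1 → v i = Z i)
    (hcovv : ∀ x : Fin d → ℝ,
      (n : ℝ)⁻¹ * ∑ i, (∑ k, (v i k - vbar k) * x k) ^ 2 ≤ υ * ∑ k, x k ^ 2)
    (hcovZ : ∀ x : Fin d → ℝ,
      (n : ℝ)⁻¹ * ∑ i, (∑ k, (Z i k - Zbar k) * x k) ^ 2 ≤ υ * ∑ k, x k ^ 2)
    (nb : ℝ) (hnb : nb = ∑ k, (vbar k - Zbar k) ^ 2) :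
    nb ^ 2 ≤ (ε + εstar) * (3 * (4 * υ * nb + nb ^ 2)) ∧
    (ε + εstar ≤ 1 / 6 → nb ≤ 24 * (ε + εstar) * υ) := by
  obtain ⟨hε0, hε1⟩ := hε
  obtain ⟨hs0, hs1⟩ := hεstar
  have hn' : (0 : ℝ) < n := by exact_mod_cast hn
  have hn0 : (n : ℝ) ≠ 0 := ne_of_gt hn'
  have hnb0 : 0 ≤ nb := by rw [hnb]; positivity
  -- abbreviations
  set b : Fin n → ℝ := fun i => ∑ k, (v i k - vbar k) * (vbar k - Zbar k) with hbdef
  set e : Fin n → ℝ := fun i => ∑ k, (Z i k - Zbar k) * (vbar k - Zbar k) with hedef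
  set a : Fin n → ℝ := fun i => ∑ k, (v i k - Z i k) * (vbar k - Zbar k) with hadef
  set c : Fin n → ℝ := fun i => 1 - W i * χ i with hcdef
  have hc01 : ∀ i, c i = 0 ∨ c i = 1 := by
    intro i
    rcases hW01 i with h | h <;> rcases hχ01 i with h' | h' <;> simp [hcdef, h, h']
  have hca : ∀ i, c i * a i = a i := by
    intro i
    rcases hc01 i with h | h
    · have h1 : W i * χ i = 1 := by
        have : (1 : ℝ) - W i * χ i = 0 := h
        linarith
      have hvz := hclean i h1
      have : a i = 0 := by simp [hadef, hvz]
      rw [this, h]; ring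
    · rw [h]; ring
  have hsumv : ∀ k, ∑ i, v i k = n * vbar k := by
    intro k
    have h := congrFun hvbar k
    simp only [Pi.smul_apply, Finset.sum_apply, smul_eq_mul] at h
    rw [h]; field_simp
  have hsumZ : ∀ k, ∑ i, Z i k = n * Zbar k := by
    intro k
    have h := congrFun hZbar k
    simp only [Pi.smul_apply, Finset.sum_apply, smul_eq_mul] at h
    rw [h]; field_simp
  have hidA : ∑ i, a i = n * nb := by
    calc ∑ i, a i = ∑ k, ∑ i, (v i k - Z i k) * (vbar k - Zbar k) := Finset.sum_comm
    _ = ∑ k, (∑ i, (v i k - Z i k)) * (vbar k - Zbar k) := by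
        exact Finset.sum_congr rfl fun k _ => (Finset.sum_mul ..).symm
    _ = ∑ k, ((n : ℝ) * vbar k - n * Zbar k) * (vbar k - Zbar k) := by
        refine Finset.sum_congr rfl fun k _ => ?_
        rw [Finset.sum_sub_distrib, hsumv k, hsumZ k]
    _ = n * ∑ k, (vbar k - Zbar k) ^ 2 := by
        rw [Finset.mul_sum]
        exact Finset.sum_congr rfl fun k _ => by ring
    _ = n * nb := by rw [hnb]
  -- Cauchy-Schwarz
  have hcs : ((n : ℝ) * nb) ^ 2 ≤ (∑ i, c i ^ 2) * ∑ i, a i ^ 2 := by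
    have h2 : ∑ i, c i * a i = n * nb := by
      rw [Finset.sum_congr rfl fun i _ => hca i, hidA]
    calc ((n : ℝ) * nb) ^ 2 = (∑ i, c i * a i) ^ 2 := by rw [h2]
    _ ≤ (∑ i, c i ^ 2) * ∑ i, a i ^ 2 := Finset.sum_mul_sq_le_sq_mul_sq ..
  -- bound on ∑ c²
  have hcsum : ∑ i, c i ^ 2 ≤ (ε + εstar) * n := by
    have h1 : ∀ i, c i ^ 2 ≤ (1 - W i) + (1 - χ i) := by
      intro i
      rcases hW01 i with h | h <;> rcases hχ01 i with h' | h' <;>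
        simp [hcdef, h, h']
    calc ∑ i, c i ^ 2 ≤ ∑ i, ((1 - W i) + (1 - χ i)) := Finset.sum_le_sum fun i _ => h1 i
    _ = (∑ i, (1 - W i)) + ∑ i, (1 - χ i) := Finset.sum_add_distrib
    _ ≤ ε * n + εstar * n := by
        have : ∑ i, (1 - W i) = ε * n := by
          rw [Finset.sum_sub_distrib, hWsum]
          simp
          ring
        linarith
    _ = (ε + εstar) * n := by ring
  -- covariance bounds
  have hb2 : ∑ i, b i ^ 2 ≤ n * (υ * nb) := by
    have h := hcovv (fun k => vbar k - Zbar k)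
    rw [← hnb] at h
    have h' : (n : ℝ)⁻¹ * ∑ i, b i ^ 2 ≤ υ * nb := h
    calc ∑ i, b i ^ 2 = n * ((n : ℝ)⁻¹ * ∑ i, b i ^ 2) := by field_simp
    _ ≤ n * (υ * nb) := by
        exact mul_le_mul_of_nonneg_left h' (le_of_lt hn')
  have he2 : ∑ i, e i ^ 2 ≤ n * (υ * nb) := by
    have h := hcovZ (fun k => vbar k - Zbar k)
    rw [← hnb] at h
    have h' : (n : ℝ)⁻¹ * ∑ i, e i ^ 2 ≤ υ * nb := h
    calc ∑ i, e i ^ 2 = n * ((n : ℝ)⁻¹ * ∑ i, e i ^ 2) := by field_simp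
    _ ≤ n * (υ * nb) := by
        exact mul_le_mul_of_nonneg_left h' (le_of_lt hn')
  -- decomposition bound on ∑ a²
  have habe : ∀ i, a i = b i - e i + nb := by
    intro i
    rw [hnb]
    simp only [hadef, hbdef, hedef]
    rw [← Finset.sum_sub_distrib, ← Finset.sum_add_distrib]
    exact Finset.sum_congr rfl fun k _ => by ring
  have hasum : ∑ i, a i ^ 2 ≤ n * (3 * (4 * υ * nb + nb ^ 2)) := by
    have h1 : ∀ i, a i ^ 2 ≤ 3 * (b i ^ 2 + e i ^ 2 + nb ^ 2) := by
      intro i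
      rw [habe i]
      nlinarith [sq_nonneg (b i + e i), sq_nonneg (b i - nb), sq_nonneg (e i + nb)]
    calc ∑ i, a i ^ 2 ≤ ∑ i, 3 * (b i ^ 2 + e i ^ 2 + nb ^ 2) :=
          Finset.sum_le_sum fun i _ => h1 i
    _ = 3 * ((∑ i, b i ^ 2) + (∑ i, e i ^ 2) + n * nb ^ 2) := by
        rw [← Finset.mul_sum, Finset.sum_add_distrib, Finset.sum_add_distrib]
        simp [Finset.sum_const, mul_comm]
    _ ≤ n * (3 * (4 * υ * nb + nb ^ 2)) := by nlinarith [mul_nonneg (mul_nonneg hυ.le hnb0) hn'.le]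
  -- main inequality
  have ha2nn : (0 : ℝ) ≤ ∑ i, a i ^ 2 := Finset.sum_nonneg fun i _ => sq_nonneg _
  have hbig : ((n : ℝ) * nb) ^ 2 ≤ ((ε + εstar) * n) * (n * (3 * (4 * υ * nb + nb ^ 2))) := by
    calc ((n : ℝ) * nb) ^ 2 ≤ (∑ i, c i ^ 2) * ∑ i, a i ^ 2 := hcs
    _ ≤ ((ε + εstar) * n) * (n * (3 * (4 * υ * nb + nb ^ 2))) := by
        apply mul_le_mul hcsum hasum ha2nn
        positivity
  have hmain : nb ^ 2 ≤ (ε + εstar) * (3 * (4 * υ * nb + nb ^ 2)) := by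
    by_contra hcon
    push_neg at hcon
    have h2 := mul_lt_mul_of_pos_left hcon (mul_pos hn' hn')
    nlinarith [hbig]
  refine ⟨hmain, fun h6 => ?_⟩
  nlinarith [hmain, hnb0, mul_pos (show (0:ℝ) < ε + εstar by linarith) hυ,
    mul_nonneg (mul_nonneg hnb0 hnb0) (show (0:ℝ) ≤ 1/6 - (ε + εstar) by linarith)]
end
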